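/- For each fixed n ≥ 1, B_n^(m) is asymptotically equal to (n!/2^{n-1}) m^{n-1} as m → ∞; that is, lim_{m→∞} B_n^(m) / ((n!/2^{n-1}) m^{n-1}) = 1. -/

import Mathlib

/-- Stirling numbers of the second kind. -/
def stirling : ℕ → ℕ → ℕ
  | 0, 0 => 1
  | 0, _ + 1 => 0
  | _ + 1, 0 => 0
  | n + 1, k + 1 => (k + 1) * stirling n (k + 1) + stirling n k

/-- Higher order Bell numbers: `higherBell m n` is `B_n^(m)`. -/
def higherBell : ℕ → ℕ → ℕ
  | 0, _ => 1
  | _ + 1, 0 => 1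
  | m + 1, n + 1 => ∑ k ∈ Finset.Icc 1 (n + 1), higherBell m k * stirling (n + 1) k

open Finset Filter

/-- Coefficients of `higherBell · n` in the binomial basis. -/
def bc : ℕ → ℕ → ℕ
  | _, 0 => 1
  | n, k + 1 => ∑ j ∈ Finset.Icc 1 (n - 1), stirling n j * bc j k
termination_by _ k => k

lemma bc_zero (n : ℕ) : bc n 0 = 1 := by simp [bc]

lemma bc_succ (n k : ℕ) : bc n (k + 1) = ∑ j ∈ Finset.Icc 1 (n - 1), stirling n j * bc j k  := by
  rw [bc]

lemma bc_eq_zero : ∀ k n, 1 ≤ n → n ≤ k → bc n k = 0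
  | 0, n, h1, h2 => by omega
  | k + 1, n, h1, h2 => by
      rw [bc_succ]
      refine Finset.sum_eq_zero fun j hj => ?_
      rw [Finset.mem_Icc] at hj
      rw [bc_eq_zero k j hj.1 (by omega), mul_zero]

lemma stirling_gt : ∀ n k, n < k → stirling n k = 0
  | 0, _ + 1, _ => rfl
  | n + 1, k + 1, h => by
      rw [stirling, stirling_gt n (k + 1) (by omega), stirling_gt n k (by omega)]
      simp

lemma stirling_self : ∀ n, stirling n n = 1
  | 0 => rfl
  | n + 1 => by
      rw [stirling, stirling_self n, stirling_gt n (n + 1) (by omega)]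
      simp

lemma stirling_pred (n : ℕ) : 2 * stirling (n + 1) n = (n + 1) * n := by
  induction n with
  | zero => rfl
  | succ n ih =>
      rw [stirling, stirling_self, Nat.mul_add, Nat.mul_add, ih]
      ring


lemma bc_top : ∀ n, bc (n + 1) n * 2 ^ n = (n + 1).factorial * n.factorial
  | 0 => by simp [bc_zero]
  | n + 1 => by
      have h1 : bc (n + 2) (n + 1) = stirling (n + 2) (n + 1) * bc (n + 1) n := by
        rw [bc_succ]
        have : (n + 2) - 1 = n + 1 := by omega
        rw [this, Finset.sum_eq_single (n + 1)]
        · intro j hj hne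
          rw [Finset.mem_Icc] at hj
          rw [bc_eq_zero n j hj.1 (by omega), mul_zero]
        · intro h; exact absurd (Finset.mem_Icc.mpr ⟨by omega, le_refl _⟩) h
      have h2 := bc_top n
      have h3 := stirling_pred (n + 1)
      calc bc (n + 2) (n + 1) * 2 ^ (n + 1)
          = (2 * stirling (n + 2) (n + 1)) * (bc (n + 1) n * 2 ^ n) := by rw [h1]; ring
        _ = ((n + 2) * (n + 1)) * ((n + 1).factorial * n.factorial) := by rw [h2, h3]
        _ = (n + 2).factorial * (n + 1).factorial := by
            rw [Nat.factorial_succ (n + 1), Nat.factorial_succ n]; ring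

lemma key (n k m : ℕ) :
    ∑ j ∈ Finset.Icc 1 (n + 1), bc j k * Nat.choose m k * stirling (n + 1) j
      = (bc (n + 1) k + bc (n + 1) (k + 1)) * Nat.choose m k := by
  have h : ∑ j ∈ Finset.Icc 1 (n + 1), bc j k * Nat.choose m k * stirling (n + 1) j
      = (∑ j ∈ Finset.Icc 1 (n + 1), stirling (n + 1) j * bc j k) * Nat.choose m k := by
    rw [Finset.sum_mul]; exact Finset.sum_congr rfl fun j _ => by ring
  rw [h, Finset.sum_Icc_succ_top (by omega), stirling_self]
  have h2 : bc (n + 1) (k + 1) = ∑ j ∈ Finset.Icc 1 n, stirling (n + 1) j * bc j k := by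
    rw [bc_succ]; norm_num
  rw [← h2, one_mul]
  ring

lemma binom_step (n m : ℕ) :
    ∑ k ∈ Finset.range (n + 1), bc (n + 1) k * Nat.choose (m + 1) k
      = ∑ k ∈ Finset.range (n + 1), (bc (n + 1) k + bc (n + 1) (k + 1)) * Nat.choose m k := by
  rw [Finset.sum_range_succ']
  simp only [Nat.choose_succ_succ]
  have hr : ∀ k ∈ Finset.range n,
      bc (n + 1) (k + 1) * (Nat.choose m k + Nat.choose m (k + 1))
        = bc (n + 1) (k + 1) * Nat.choose m k + bc (n + 1) (k + 1) * Nat.choose m (k + 1) := by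
    intro k _; ring
  rw [Finset.sum_congr rfl hr, Finset.sum_add_distrib]
  conv_rhs =>
    rw [Finset.sum_congr rfl (fun k (_ : k ∈ Finset.range (n+1)) => add_mul (bc (n+1) k)
      (bc (n+1) (k+1)) (Nat.choose m k)), Finset.sum_add_distrib,
      Finset.sum_range_succ', Finset.sum_range_succ]
  rw [bc_eq_zero (n + 1) (n + 1) (by omega) (le_refl _)]
  simp [bc_zero]
  ring

lemma hb_eq : ∀ m n, higherBell m (n + 1)
    = ∑ k ∈ Finset.range (n + 1), bc (n + 1) k * Nat.choose m k
  | 0, n => by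
      rw [show higherBell 0 (n + 1) = 1 from rfl, Finset.sum_eq_single 0]
      · simp [bc_zero]
      · intro k _ hk
        rw [Nat.choose_eq_zero_of_lt (by omega), mul_zero]
      · intro h; exact absurd (Finset.mem_range.mpr (by omega)) h
  | m + 1, n => by
      have step : higherBell (m + 1) (n + 1)
          = ∑ j ∈ Finset.Icc 1 (n + 1), higherBell m j * stirling (n + 1) j := rfl
      have hext : ∀ j ∈ Finset.Icc 1 (n + 1),
          higherBell m j = ∑ k ∈ Finset.range (n + 1), bc j k * Nat.choose m k := by
        intro j hj
        rw [Finset.mem_Icc] at hj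
        obtain ⟨j', rfl⟩ : ∃ j', j = j' + 1 := ⟨j - 1, by omega⟩
        rw [hb_eq m j']
        apply Finset.sum_subset (Finset.range_subset_range.mpr (by omega))
        intro k _ hk
        rw [Finset.mem_range] at hk
        rw [bc_eq_zero k (j' + 1) (by omega) (by omega), zero_mul]
      rw [step, Finset.sum_congr rfl (fun j hj => by rw [hext j hj]),
        Finset.sum_congr rfl (fun j (_ : j ∈ Finset.Icc 1 (n+1)) =>
          Finset.sum_mul (Finset.range (n+1)) _ (stirling (n+1) j)),
        Finset.sum_comm, Finset.sum_congr rfl (fun k _ => key n k m), binom_step]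

open Filter Topology in
lemma tendsto_choose_div (k : ℕ) :
    Tendsto (fun m : ℕ => (m.choose k : ℝ) / (m : ℝ) ^ k) atTop
      (nhds (1 / (k.factorial : ℝ))) := by
  have hdesc : Tendsto (fun m : ℕ => (m.descFactorial k : ℝ) / (m : ℝ) ^ k) atTop (nhds 1) := by
    have hlim : Tendsto (fun m : ℕ => ∏ i ∈ Finset.range k, (1 - (i : ℝ) / (m : ℕ))) atTop
        (nhds 1) := by
      have : Tendsto (fun m : ℕ => ∏ i ∈ Finset.range k, (1 - (i : ℝ) / (m : ℕ))) atTop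
          (nhds (∏ i ∈ Finset.range k, (1 : ℝ))) := by
        apply tendsto_finset_prod
        intro i _
        have : Tendsto (fun m : ℕ => (i : ℝ) / (m : ℕ)) atTop (nhds 0) :=
          tendsto_const_div_atTop_nhds_zero_nat (i : ℝ)
        have := this.const_sub 1
        simpa using this
      simpa using this
    apply hlim.congr'
    filter_upwards [eventually_ge_atTop k] with m hm
    rw [Nat.descFactorial_eq_prod_range, Nat.cast_prod]
    have hcast : ∀ i ∈ Finset.range k, ((m - i : ℕ) : ℝ) = (m : ℝ) - i := by
      intro i hi; rw [Finset.mem_range] at hi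
      exact_mod_cast Nat.cast_sub (by omega)
    rw [Finset.prod_congr rfl hcast, show ((m : ℝ)) ^ k = ∏ _i ∈ Finset.range k, (m : ℝ) by
      rw [Finset.prod_const, Finset.card_range], ← Finset.prod_div_distrib]
    apply Finset.prod_congr rfl
    intro i hi
    rw [Finset.mem_range] at hi
    have hm0 : (m : ℝ) ≠ 0 := by
      have : 0 < m := by omega
      positivity
    field_simp
  have := hdesc.div_const (k.factorial : ℝ)
  apply this.congr
  intro m
  have h := Nat.descFactorial_eq_factorial_mul_choose m k
  have hk : (k.factorial : ℝ) ≠ 0 := by positivity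
  rw [show ((m.descFactorial k : ℕ) : ℝ) = (k.factorial : ℝ) * (m.choose k : ℝ) by
    exact_mod_cast congrArg Nat.cast h, div_right_comm, mul_div_cancel_left₀ _ hk]

open Filter Topology in
lemma tendsto_choose_div_zero (k j : ℕ) (h : k < j) :
    Tendsto (fun m : ℕ => (m.choose k : ℝ) / (m : ℝ) ^ j) atTop (nhds 0) := by
  have h1 : Tendsto (fun m : ℕ => ((m : ℝ) ^ (j - k))⁻¹) atTop (nhds 0) := by
    apply Tendsto.inv_tendsto_atTop
    exact (tendsto_pow_atTop (by omega)).comp tendsto_natCast_atTop_atTop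
  have h2 := (tendsto_choose_div k).mul h1
  rw [mul_zero] at h2
  apply h2.congr'
  filter_upwards [eventually_ge_atTop 1] with m hm
  have hm0 : (m : ℝ) ≠ 0 := by
    simp only [ne_eq, Nat.cast_eq_zero]; omega
  have hpow : (m : ℝ) ^ j = (m : ℝ) ^ k * (m : ℝ) ^ (j - k) := by
    rw [← pow_add]; congr 1; omega
  rw [hpow]
  field_simp

theorem stmt8 (n : ℕ) (hn : 1 ≤ n) :
    Filter.Tendsto
      (fun m : ℕ => (higherBell m n : ℝ) / ((n.factorial / 2 ^ (n - 1)) * (m : ℝ) ^ (n - 1)))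
      Filter.atTop (nhds 1) := by
  obtain ⟨N, rfl⟩ : ∃ N, n = N + 1 := ⟨n - 1, by omega⟩
  simp only [Nat.add_sub_cancel]
  set C : ℝ := ((N + 1).factorial : ℝ) / 2 ^ N with hC
  have hCpos : (0 : ℝ) < C := by positivity
  have hfun : ∀ m : ℕ, (higherBell m (N + 1) : ℝ) / (C * (m : ℝ) ^ N)
      = ∑ k ∈ Finset.range (N + 1),
          ((bc (N + 1) k : ℝ) / C) * ((m.choose k : ℝ) / (m : ℝ) ^ N) := by
    intro m
    rw [hb_eq m N]
    push_cast
    rw [Finset.sum_div]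
    apply Finset.sum_congr rfl
    intro k _
    rw [div_mul_div_comm]
  have hterm : ∀ k ∈ Finset.range (N + 1),
      Filter.Tendsto (fun m : ℕ => ((bc (N + 1) k : ℝ) / C) * ((m.choose k : ℝ) / (m : ℝ) ^ N))
        Filter.atTop
        (nhds (((bc (N + 1) k : ℝ) / C) * (if k = N then 1 / (N.factorial : ℝ) else 0))) := by
    intro k hk
    rw [Finset.mem_range] at hk
    rcases eq_or_lt_of_le (by omega : k ≤ N) with hkN | hkN
    · subst hkN
      simp only [if_pos rfl]
      exact (tendsto_choose_div k).const_mul _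
    · rw [if_neg (by omega)]
      exact (tendsto_choose_div_zero k N hkN).const_mul _
  have hsum := tendsto_finset_sum (Finset.range (N + 1)) hterm
  have hval : ∑ k ∈ Finset.range (N + 1),
      ((bc (N + 1) k : ℝ) / C) * (if k = N then 1 / (N.factorial : ℝ) else 0) = 1 := by
    rw [Finset.sum_eq_single N]
    · rw [if_pos rfl]
      have h := bc_top N
      have h' : (bc (N + 1) N : ℝ) * 2 ^ N = ((N + 1).factorial : ℝ) * (N.factorial : ℝ) := by
        exact_mod_cast congrArg Nat.cast h
      have h1 : ((N + 1).factorial : ℝ) ≠ 0 := by positivity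
      have h2 : (N.factorial : ℝ) ≠ 0 := by positivity
      have h3 : (2 : ℝ) ^ N ≠ 0 := by positivity
      rw [hC]
      field_simp
      linarith [h']
    · intro k _ hne; rw [if_neg hne, mul_zero]
    · intro habs; exact absurd (Finset.mem_range.mpr (by omega)) habs
  rw [hval] at hsum
  exact hsum.congr (fun m => (hfun m).symm)
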